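/- arXiv:1609.04120 — 2 statements merged into one kernel-verified Lean document; each statement's English description precedes it below -/
import Mathlib

section
/- Gaussian mechanism satisfies zCDP: if a function f has L2-sensitivity Δ (i.e., ‖f(X) − f(X')‖₂ ≤ Δ for all neighbouring datasets X, X'), then the mechanism M(X) = f(X) + N(0, τ·I) with noise variance τ satisfies ρ-zero-concentrated differential privacy with ρ = Δ²/(2τ). Concretely, for all α > 1 and all neighbouring X, X', the Rényi divergence of order α between M(X) and M(X') satisfies D_α(M(X) ‖ M(X')) ≤ (Δ²/(2τ))·α. -/
open MeasureTheory ProbabilityTheory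

/-- Rényi divergence of order `α` between `P` and `Q`:
`D_α(P‖Q) = (α−1)⁻¹ · log ∫ (dP/dQ)^α dQ`. -/
noncomputable def renyiDiv {Ω : Type*} [MeasurableSpace Ω] (P Q : Measure Ω) (α : ℝ) : ℝ :=
  (α - 1)⁻¹ * Real.log (∫ x, ((P.rnDeriv Q) x).toReal ^ α ∂Q)

/-- The Gaussian mechanism: add independent `N(0, τ)` noise to each coordinate of `f`. -/
noncomputable def gaussianMechanism {X : Type*} {d : ℕ} (f : X → Fin d → ℝ) (τ : NNReal)
    (x : X) : Measure (Fin d → ℝ) :=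
  Measure.pi (fun i => gaussianReal (f x i) τ)

/-!
Both mechanisms are products of one-dimensional Gaussians with the same variance, so the
likelihood ratio factorises over coordinates. In each coordinate, `N(μ, v)` has density
`exp (gaussianLLR μ ν v)` with respect to `N(ν, v)`, and completing the square shows that
`exp (α · gaussianLLR μ ν v)` integrates against `N(ν, v)` to
`exp (α (α - 1) (μ - ν)² / (2v))`.
Hence `D_α = α ‖μ - ν‖² / (2v)` exactly, and the sensitivity bound finishes the proof.
-/

open Real
open scoped ENNReal NNReal

namespace MeasureTheory

variable {α : Type*} [MeasurableSpace α]

theorem lintegral_fin_nat_prod_eq_prod {n : ℕ} (μ : Fin n → Measure α)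
    [∀ i, SigmaFinite (μ i)] (f : Fin n → α → ℝ≥0∞) (hf : ∀ i, Measurable (f i)) :
    ∫⁻ x, ∏ i, f i (x i) ∂Measure.pi μ = ∏ i, ∫⁻ x, f i x ∂μ i := by
  induction n with
  | zero => simp
  | succ n ih =>
    have hf_tail : Measurable fun y : Fin n → α => ∏ j, f j.succ (y j) :=
      Finset.measurable_prod _ fun j _ => (hf j.succ).comp (measurable_pi_apply j)
    calc ∫⁻ x, ∏ i, f i (x i) ∂Measure.pi μ
        = ∫⁻ p, f 0 p.1 * ∏ j : Fin n, f j.succ (p.2 j)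
            ∂(μ 0).prod (Measure.pi fun j => μ ((0 : Fin (n + 1)).succAbove j)) := by
          rw [← (measurePreserving_piFinSuccAbove μ 0).lintegral_comp (by fun_prop)]
          simp [Fin.prod_univ_succ, MeasurableEquiv.piFinSuccAbove, Fin.tail]
      _ = ∏ i, ∫⁻ x, f i x ∂μ i := by
          simp only [Fin.zero_succAbove]
          rw [lintegral_prod_mul (hf 0).aemeasurable hf_tail.aemeasurable,
            ih _ _ fun j => hf j.succ, Fin.prod_univ_succ]

theorem lintegral_fintype_prod_eq_prod {ι : Type*} [Fintype ι] (μ : ι → Measure α)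
    [∀ i, SigmaFinite (μ i)] (f : ι → α → ℝ≥0∞) (hf : ∀ i, Measurable (f i)) :
    ∫⁻ x, ∏ i, f i (x i) ∂Measure.pi μ = ∏ i, ∫⁻ x, f i x ∂μ i := by
  let e := (Fintype.equivFin ι).symm
  rw [← (measurePreserving_piCongrLeft μ e).lintegral_comp
    (by fun_prop : Measurable fun x : ι → α => ∏ i, f i (x i))]
  simp_rw [← e.prod_comp, MeasurableEquiv.coe_piCongrLeft, Equiv.piCongrLeft_apply_apply]
  exact lintegral_fin_nat_prod_eq_prod _ _ fun i => hf (e i)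

theorem Measure.pi_withDensity {ι : Type*} [Fintype ι] (μ : ι → Measure α)
    [∀ i, SigmaFinite (μ i)] (f : ι → α → ℝ≥0∞) (hf : ∀ i, Measurable (f i))
    [∀ i, SigmaFinite ((μ i).withDensity (f i))] :
    Measure.pi (fun i => (μ i).withDensity (f i))
      = (Measure.pi μ).withDensity (fun x => ∏ i, f i (x i)) := by
  refine Measure.pi_eq fun s hs => ?_
  have hbox : MeasurableSet (Set.univ.pi s) := MeasurableSet.univ_pi hs
  have indicator_box : (Set.univ.pi s).indicator (fun x => ∏ i, f i (x i))
      = fun x => ∏ i, (s i).indicator (f i) (x i) := by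
    ext x
    by_cases hx : x ∈ Set.univ.pi s
    · rw [Set.indicator_of_mem hx]
      exact Finset.prod_congr rfl fun i _ => (Set.indicator_of_mem (hx i trivial) _).symm
    · obtain ⟨j, hj⟩ := not_forall.mp (Set.mem_univ_pi.not.mp hx)
      rw [Set.indicator_of_notMem hx]
      exact (Finset.prod_eq_zero (Finset.mem_univ j) (Set.indicator_of_notMem hj _)).symm
  rw [withDensity_apply _ hbox, ← lintegral_indicator hbox, indicator_box,
    lintegral_fintype_prod_eq_prod μ _ fun i => (hf i).indicator (hs i)]
  exact Finset.prod_congr rfl fun i _ => by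
    rw [lintegral_indicator (hs i), withDensity_apply _ (hs i)]

end MeasureTheory

namespace ProbabilityTheory

variable {v : ℝ≥0}

/-- `log (dN(μ, v) / dN(ν, v))`. -/
noncomputable def gaussianLLR (μ ν : ℝ) (v : ℝ≥0) (t : ℝ) : ℝ :=
  ((t - ν) ^ 2 - (t - μ) ^ 2) / (2 * v)

@[fun_prop]
lemma measurable_gaussianLLR (μ ν : ℝ) (v : ℝ≥0) : Measurable (gaussianLLR μ ν v) := by
  unfold gaussianLLR
  fun_prop

lemma gaussianPDFReal_mul_exp_gaussianLLR (hv : v ≠ 0) (μ ν α t : ℝ) :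
    gaussianPDFReal ν v t * exp (α * gaussianLLR μ ν v t)
      = exp (α * (α - 1) * (μ - ν) ^ 2 / (2 * v))
        * gaussianPDFReal (ν + α * (μ - ν)) v t := by
  have complete_square : -(t - ν) ^ 2 / (2 * v) + α * gaussianLLR μ ν v t
      = α * (α - 1) * (μ - ν) ^ 2 / (2 * v) + -(t - (ν + α * (μ - ν))) ^ 2 / (2 * v) := by
    unfold gaussianLLR
    field_simp
    ring
  simp only [gaussianPDFReal]
  rw [mul_assoc, ← exp_add, complete_square, exp_add]
  ring

lemma gaussianReal_eq_withDensity_gaussianLLR (hv : v ≠ 0) (μ ν : ℝ) :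
    gaussianReal μ v
      = (gaussianReal ν v).withDensity fun t => ENNReal.ofReal (exp (gaussianLLR μ ν v t)) := by
  rw [gaussianReal_of_var_ne_zero _ hv, gaussianReal_of_var_ne_zero _ hv,
    ← withDensity_mul _ (measurable_gaussianPDF _ _) (by fun_prop)]
  congr 1 with t
  have h := gaussianPDFReal_mul_exp_gaussianLLR hv μ ν 1 t
  simp only [one_mul, sub_self, mul_zero, zero_mul, zero_div, exp_zero, add_sub_cancel] at h
  rw [Pi.mul_apply, gaussianPDF, gaussianPDF, ← ENNReal.ofReal_mul (gaussianPDFReal_nonneg _ _ _),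
    h]

lemma integral_exp_mul_gaussianLLR (hv : v ≠ 0) (μ ν α : ℝ) :
    ∫ t, exp (α * gaussianLLR μ ν v t) ∂gaussianReal ν v
      = exp (α * (α - 1) * (μ - ν) ^ 2 / (2 * v)) := by
  simp_rw [integral_gaussianReal_eq_integral_smul hv, smul_eq_mul,
    gaussianPDFReal_mul_exp_gaussianLLR hv, integral_const_mul,
    integral_gaussianPDFReal_eq_one _ hv, mul_one]

variable {ι : Type*} [Fintype ι]

lemma pi_gaussianReal_eq_withDensity (hv : v ≠ 0) (μ ν : ι → ℝ) :
    Measure.pi (fun i => gaussianReal (μ i) v)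
      = (Measure.pi fun i => gaussianReal (ν i) v).withDensity
          fun x => ∏ i, ENNReal.ofReal (exp (gaussianLLR (μ i) (ν i) v (x i))) := by
  have : ∀ i, SigmaFinite ((gaussianReal (ν i) v).withDensity
      fun t => ENNReal.ofReal (exp (gaussianLLR (μ i) (ν i) v t))) := fun i => by
    rw [← gaussianReal_eq_withDensity_gaussianLLR hv]
    infer_instance
  rw [funext fun i => gaussianReal_eq_withDensity_gaussianLLR hv (μ i) (ν i)]
  exact Measure.pi_withDensity _ _ fun i => by fun_prop

lemma rnDeriv_pi_gaussianReal (hv : v ≠ 0) (μ ν : ι → ℝ) :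
    (Measure.pi fun i => gaussianReal (μ i) v).rnDeriv (Measure.pi fun i => gaussianReal (ν i) v)
      =ᵐ[Measure.pi fun i => gaussianReal (ν i) v]
        fun x => ∏ i, ENNReal.ofReal (exp (gaussianLLR (μ i) (ν i) v (x i))) := by
  rw [pi_gaussianReal_eq_withDensity hv μ ν]
  exact Measure.rnDeriv_withDensity _ (by fun_prop)

lemma integral_prod_exp_mul_gaussianLLR (hv : v ≠ 0) (μ ν : ι → ℝ) (α : ℝ) :
    ∫ x, ∏ i, exp (α * gaussianLLR (μ i) (ν i) v (x i))
        ∂(Measure.pi fun i => gaussianReal (ν i) v)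
      = exp (∑ i, α * (α - 1) * (μ i - ν i) ^ 2 / (2 * v)) := by
  rw [integral_fintype_prod_eq_prod fun i t => exp (α * gaussianLLR (μ i) (ν i) v t),
    Real.exp_sum]
  exact Finset.prod_congr rfl fun i _ => integral_exp_mul_gaussianLLR hv _ _ _

theorem renyiDiv_pi_gaussianReal (hv : v ≠ 0) (μ ν : ι → ℝ) {α : ℝ} (hα : α ≠ 1) :
    renyiDiv (Measure.pi fun i => gaussianReal (μ i) v) (Measure.pi fun i => gaussianReal (ν i) v)
      α = α * ∑ i, (μ i - ν i) ^ 2 / (2 * v) := by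
  have moment : ∫ x, ((Measure.pi fun i => gaussianReal (μ i) v).rnDeriv
        (Measure.pi fun i => gaussianReal (ν i) v) x).toReal ^ α
          ∂(Measure.pi fun i => gaussianReal (ν i) v)
      = ∫ x, ∏ i, exp (α * gaussianLLR (μ i) (ν i) v (x i))
          ∂(Measure.pi fun i => gaussianReal (ν i) v) := by
    refine integral_congr_ae ?_
    filter_upwards [rnDeriv_pi_gaussianReal hv μ ν] with x hx
    rw [hx, ENNReal.toReal_prod, ← Real.finsetProd_rpow _ _ fun i _ => ENNReal.toReal_nonneg]
    refine Finset.prod_congr rfl fun i _ => ?_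
    rw [ENNReal.toReal_ofReal (exp_pos _).le, ← exp_mul, mul_comm]
  rw [renyiDiv, moment, integral_prod_exp_mul_gaussianLLR hv, Real.log_exp, Finset.mul_sum,
    Finset.mul_sum]
  refine Finset.sum_congr rfl fun i _ => ?_
  field_simp [sub_ne_zero.mpr hα]

end ProbabilityTheory

/-- Gaussian mechanism satisfies `Δ²/(2τ)`-zCDP: if `f` has L2-sensitivity `Δ`, then for all
`α > 1` and neighbouring datasets, `D_α(M(X) ‖ M(X')) ≤ (Δ²/(2τ))·α`. -/
theorem gaussianMechanism_zCDP {X : Type*} {d : ℕ} (Neighbor : X → X → Prop)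
    (f : X → Fin d → ℝ) (τ : NNReal) (hτ : 0 < τ) (Δ : ℝ)
    (hsens : ∀ x x', Neighbor x x' →
      Real.sqrt (∑ i, (f x i - f x' i) ^ 2) ≤ Δ) :
    ∀ α : ℝ, 1 < α → ∀ x x', Neighbor x x' →
      renyiDiv (gaussianMechanism f τ x) (gaussianMechanism f τ x') α ≤
        (Δ ^ 2 / (2 * (τ : ℝ))) * α := by
  intro α hα x x' hN
  have sq_dist_le : ∑ i, (f x i - f x' i) ^ 2 ≤ Δ ^ 2 :=
    (Real.sqrt_le_iff.mp (hsens x x' hN)).2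
  rw [gaussianMechanism, gaussianMechanism, renyiDiv_pi_gaussianReal hτ.ne' _ _ hα.ne',
    ← Finset.sum_div, mul_comm]
  exact mul_le_mul_of_nonneg_right (div_le_div_of_nonneg_right sq_dist_le (by positivity))
    (by linarith)
end

section
/- Rényi divergence between shifted Gaussians: for any α > 1, means μ₁, μ₂ ∈ ℝ and variance τ > 0, the Rényi divergence of order α between N(μ₁, τ) and N(μ₂, τ) equals α·(μ₁ − μ₂)²/(2τ). -/
open MeasureTheory ProbabilityTheory Real
open scoped ENNReal

/-- Rényi divergence between shifted Gaussians: for `α > 1` and variance `τ > 0`,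
`D_α(N(μ₁, τ) ‖ N(μ₂, τ)) = α·(μ₁ − μ₂)²/(2τ)`. -/
theorem renyiDiv_gaussian (α μ₁ μ₂ : ℝ) (hα : 1 < α) (τ : NNReal) (hτ : 0 < τ) :
    renyiDiv (gaussianReal μ₁ τ) (gaussianReal μ₂ τ) α = α * (μ₁ - μ₂) ^ 2 / (2 * (τ : ℝ)) := by
  have hτ0 : τ ≠ 0 := hτ.ne'
  have hτR : (0:ℝ) < (τ:ℝ) := hτ
  set p : ℝ → ℝ := gaussianPDFReal μ₁ τ with hp
  set q : ℝ → ℝ := gaussianPDFReal μ₂ τ with hq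
  have hppos : ∀ x, 0 < p x := fun x => gaussianPDFReal_pos _ _ _ hτ0
  have hqpos : ∀ x, 0 < q x := fun x => gaussianPDFReal_pos _ _ _ hτ0
  set m : ℝ := α * μ₁ + (1 - α) * μ₂ with hm
  set K : ℝ := rexp (α * (α - 1) * (μ₁ - μ₂) ^ 2 / (2 * (τ:ℝ))) with hK
  -- pointwise identity
  have hpt : ∀ x, (p x / q x) ^ α * q x = gaussianPDFReal m τ x * K := by
    intro x
    set c : ℝ := (Real.sqrt (2 * π * τ))⁻¹ with hc
    have hpq : p x / q x = rexp (- (x - μ₁)^2 / (2 * τ) - (- (x - μ₂)^2 / (2 * τ))) := by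
      rw [Real.exp_sub]
      simp only [hp, hq, gaussianPDFReal]
      field_simp
    have hgq : q x = c * rexp (-(x - μ₂)^2 / (2 * (τ:ℝ))) := rfl
    have hgm : gaussianPDFReal m τ x = c * rexp (-(x - m)^2 / (2 * (τ:ℝ))) := rfl
    rw [hpq, Real.rpow_def_of_pos (Real.exp_pos _), Real.log_exp, hgq, hgm, hK]
    have key : (-(x - μ₁)^2 / (2*(τ:ℝ)) - -(x - μ₂)^2 / (2*(τ:ℝ))) * α
        + (-(x - μ₂)^2 / (2*(τ:ℝ)))
        = -(x - m)^2 / (2*(τ:ℝ)) + α * (α - 1) * (μ₁ - μ₂)^2 / (2*(τ:ℝ)) := by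
      rw [hm]; field_simp; ring
    calc rexp ((-(x - μ₁)^2 / (2*(τ:ℝ)) - -(x - μ₂)^2 / (2*(τ:ℝ))) * α)
          * (c * rexp (-(x - μ₂)^2 / (2*(τ:ℝ))))
        = c * rexp ((-(x - μ₁)^2 / (2*(τ:ℝ)) - -(x - μ₂)^2 / (2*(τ:ℝ))) * α
            + -(x - μ₂)^2 / (2*(τ:ℝ))) := by rw [Real.exp_add]; ring
      _ = c * rexp (-(x - m)^2 / (2*(τ:ℝ)) + α * (α - 1) * (μ₁ - μ₂)^2 / (2*(τ:ℝ))) := by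
            rw [key]
      _ = c * rexp (-(x - m)^2 / (2*(τ:ℝ))) * rexp (α * (α - 1) * (μ₁ - μ₂)^2 / (2*(τ:ℝ))) := by
            rw [Real.exp_add]; ring
  -- rnDeriv formula
  have hfmeas : Measurable fun x => ENNReal.ofReal (p x / q x) :=
    ((measurable_gaussianPDFReal μ₁ τ).div (measurable_gaussianPDFReal μ₂ τ)).ennreal_ofReal
  have hP : gaussianReal μ₁ τ
      = (gaussianReal μ₂ τ).withDensity (fun x => ENNReal.ofReal (p x / q x)) := by
    rw [gaussianReal_of_var_ne_zero _ hτ0, gaussianReal_of_var_ne_zero _ hτ0,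
      ← withDensity_mul _ (measurable_gaussianPDF _ _) hfmeas]
    congr 1
    ext x
    simp only [Pi.mul_apply, gaussianPDF]
    rw [← ENNReal.ofReal_mul (gaussianPDFReal_nonneg _ _ _)]
    congr 1
    rw [mul_div_assoc', mul_comm, mul_div_assoc, div_self (ne_of_gt (hqpos x)), mul_one]
  have hrn : (gaussianReal μ₁ τ).rnDeriv (gaussianReal μ₂ τ)
      =ᵐ[gaussianReal μ₂ τ] fun x => ENNReal.ofReal (p x / q x) := by
    conv_lhs => rw [hP]
    exact Measure.rnDeriv_withDensity _ hfmeas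
  have hint : (∫ x, (((gaussianReal μ₁ τ).rnDeriv (gaussianReal μ₂ τ)) x).toReal ^ α
      ∂(gaussianReal μ₂ τ)) = ∫ x, (p x / q x) ^ α ∂(gaussianReal μ₂ τ) := by
    refine integral_congr_ae ?_
    filter_upwards [hrn] with x hx
    rw [hx, ENNReal.toReal_ofReal (le_of_lt (div_pos (hppos x) (hqpos x)))]
  have hint2 : (∫ x, (p x / q x) ^ α ∂(gaussianReal μ₂ τ)) = K := by
    rw [gaussianReal_of_var_ne_zero _ hτ0]
    have h1 : volume.withDensity (gaussianPDF μ₂ τ)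
        = volume.withDensity (fun x => ((q x).toNNReal : ℝ≥0∞)) := rfl
    rw [h1, integral_withDensity_eq_integral_smul
      ((measurable_gaussianPDFReal μ₂ τ).real_toNNReal) _]
    have h2 : (∫ x, (q x).toNNReal • (p x / q x) ^ α) = ∫ x, gaussianPDFReal m τ x * K := by
      refine integral_congr_ae (ae_of_all _ fun x => ?_)
      show (q x).toNNReal • (p x / q x) ^ α = gaussianPDFReal m τ x * K
      rw [NNReal.smul_def, smul_eq_mul, Real.coe_toNNReal _ (le_of_lt (hqpos x)), mul_comm,
        hpt x]
    rw [h2, integral_mul_const, integral_gaussianPDFReal_eq_one _ hτ0, one_mul]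
  unfold renyiDiv
  rw [hint, hint2, hK, Real.log_exp]
  have h1 : α - 1 ≠ 0 := sub_ne_zero.mpr hα.ne'
  field_simp [h1]
end
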